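/- arXiv:2006.16290 — 4 statements merged into one kernel-verified Lean document; each statement's English description precedes it below -/
import Mathlib

section
/- For any two probability vectors p and q of dimension d, if p^{⊗k} majorizes q^{⊗k} for some k ≥ 1, then the tensor product p ⊗ z majorizes q ⊗ z, where z is the Duan state z = (1/k)[p^{⊗(k-1)} ⊕ (p^{⊗(k-2)} ⊗ q) ⊕ ... ⊕ (p ⊗ q^{⊗(k-2)}) ⊕ q^{⊗(k-1)}]. -/
open Finset

def IsProbVec {ι : Type*} [Fintype ι] (x : ι → ℝ) : Prop :=
  (∀ i, 0 ≤ x i) ∧ ∑ i, x i = 1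

def Majorizes {ι κ : Type*} [Fintype ι] [Fintype κ] (x : ι → ℝ) (y : κ → ℝ) : Prop :=
  (∑ i, x i = ∑ j, y j) ∧
    ∀ s : Finset κ, ∃ t : Finset ι, t.card = s.card ∧ ∑ j ∈ s, y j ≤ ∑ i ∈ t, x i

noncomputable def tens {ι κ : Type*} (x : ι → ℝ) (y : κ → ℝ) : ι × κ → ℝ :=
  fun p => x p.1 * y p.2

noncomputable def tpow {ι : Type*} (x : ι → ℝ) (k : ℕ) : (Fin k → ι) → ℝ :=
  fun f => ∏ j, x (f j)

noncomputable def duan {d : ℕ} (k : ℕ) (p q : Fin d → ℝ) :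
    Fin k × (Fin (k - 1) → Fin d) → ℝ :=
  fun x => (1 / (k : ℝ)) *
    ∏ j : Fin (k - 1), if (j : ℕ) < k - 1 - (x.1 : ℕ) then p (x.2 j) else q (x.2 j)

section aux
variable {d n : ℕ} (p q : Fin d → ℝ)

/-- key step-down identity between blocks -/
lemma duan_step (a : Fin d) (i : Fin (n+1)) (f : Fin (n+1-1) → Fin d)
    (hi : (i:ℕ) < n) :
    tens p (duan (n+1) p q) (f ⟨n-1-i, by omega⟩,
      (⟨(i:ℕ)+1, by omega⟩, Function.update f ⟨n-1-i, by omega⟩ a))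
    = tens q (duan (n+1) p q) (a, (i, f)) := by
  simp only [tens, duan]
  set m : Fin (n+1-1) := ⟨n-1-i, by omega⟩ with hm
  rw [← Finset.mul_prod_erase _ _ (Finset.mem_univ m),
    ← Finset.mul_prod_erase _ _ (Finset.mem_univ m)]
  have h1 : (if (m:ℕ) < n+1-1-((⟨(i:ℕ)+1, by omega⟩ : Fin (n+1)):ℕ) then
      p (Function.update f m a m) else q (Function.update f m a m)) = q a := by
    rw [if_neg (by simp [hm]; omega), Function.update_self]
  have h2 : (if (m:ℕ) < n+1-1-(i:ℕ) then p (f m) else q (f m)) = p (f m) := by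
    rw [if_pos (by simp [hm]; omega)]
  rw [h1, h2]
  have h3 : ∏ j ∈ Finset.univ.erase m,
      (if (j:ℕ) < n+1-1-((⟨(i:ℕ)+1, by omega⟩ : Fin (n+1)):ℕ) then
        p (Function.update f m a j) else q (Function.update f m a j))
      = ∏ j ∈ Finset.univ.erase m, (if (j:ℕ) < n+1-1-(i:ℕ) then p (f j) else q (f j)) := by
    apply Finset.prod_congr rfl
    intro j hj
    have hjm : j ≠ m := (Finset.mem_erase.mp hj).1
    have hjm' : (j:ℕ) ≠ n-1-(i:ℕ) := by
      intro h; exact hjm (Fin.ext (by simp [hm, h]))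
    have hjlt : (j:ℕ) < n+1-1 := j.isLt
    rw [Function.update_of_ne hjm]
    have : ((j:ℕ) < n+1-1-((i:ℕ)+1)) ↔ ((j:ℕ) < n+1-1-(i:ℕ)) := by omega
    simp only [this]
  rw [h3]; ring

/-- block 0 of the p-side is `(1/k)·p^{⊗k}` -/
lemma duan_block0 (g : Fin (n+1) → Fin d) :
    tens p (duan (n+1) p q) (g 0, ((0 : Fin (n+1)), fun j => g j.succ))
    = (1/(n+1:ℝ)) * tpow p (n+1) g := by
  simp only [tens, duan, tpow]
  have hcond : ∀ j : Fin (n+1-1), ((j:ℕ) < n+1-1-((0 : Fin (n+1)):ℕ)) := by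
    intro j; simpa using j.isLt
  simp only [if_pos (hcond _)]
  have h1 : (∏ x : Fin (n+1-1), p (g x.succ)) = ∏ i : Fin n, p (g i.succ) := rfl
  rw [h1, Fin.prod_univ_succ (fun j : Fin (n+1) => p (g j))]
  push_cast
  ring

/-- block n of the q-side is `(1/k)·q^{⊗k}` -/
lemma duan_blockn (a : Fin d) (i : Fin (n+1)) (f : Fin (n+1-1) → Fin d)
    (hi : ¬ (i:ℕ) < n) :
    tens q (duan (n+1) p q) (a, (i, f))
    = (1/(n+1:ℝ)) * tpow q (n+1) (Fin.cons a f) := by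
  simp only [tens, duan, tpow]
  have hi' : (i:ℕ) = n := by omega
  have hcond : ∀ j : Fin (n+1-1), ¬ ((j:ℕ) < n+1-1-(i:ℕ)) := by
    intro j; omega
  simp only [if_neg (hcond _)]
  have h1 : (∏ j : Fin (n+1), q ((Fin.cons a f : Fin (n+1) → Fin d) j))
      = q a * ∏ x : Fin (n+1-1), q (f x) := by
    have h2 : (∏ j : Fin (n+1), q ((Fin.cons a f : Fin (n+1) → Fin d) j))
        = q ((Fin.cons a f : Fin (n+1) → Fin d) 0) *
          ∏ i : Fin n, q ((Fin.cons a f : Fin (n+1) → Fin d) i.succ) :=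
      Fin.prod_univ_succ _
    rw [h2]
    have h3 : (∏ i : Fin n, q ((Fin.cons a f : Fin (n+1) → Fin d) i.succ))
        = ∏ x : Fin (n+1-1), q (f x) := by
      have : ∀ i : Fin n, (Fin.cons a f : Fin (n+1) → Fin d) i.succ = f i := fun i => rfl
      simp only [this]; rfl
    rw [h3, Fin.cons_zero]
  rw [h1]
  push_cast
  ring

end aux

/-- If `p^{⊗k}` majorizes `q^{⊗k}` for some `k ≥ 1`, then
`p ⊗ z_k^D(p,q)` majorizes `q ⊗ z_k^D(p,q)`. -/
theorem duan_catalysis {d k : ℕ} (hk : 1 ≤ k) (p q : Fin d → ℝ)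
    (hp : IsProbVec p) (hq : IsProbVec q)
    (hmaj : Majorizes (tpow p k) (tpow q k)) :
    Majorizes (tens p (duan k p q)) (tens q (duan k p q)) := by
  classical
  obtain ⟨n, rfl⟩ : ∃ n, k = n + 1 := ⟨k - 1, by omega⟩
  set z := duan (n+1) p q with hz
  constructor
  · have hsum : ∀ x : Fin d → ℝ, (∑ i, x i) = 1 →
        ∑ y : Fin d × (Fin (n+1) × (Fin (n+1-1) → Fin d)), tens x z y = ∑ b, z b := by
      intro x hx
      rw [Fintype.sum_prod_type]
      calc ∑ a, ∑ b, x a * z b = (∑ a, x a) * ∑ b, z b := (Finset.sum_mul_sum _ _ _ _).symm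
        _ = ∑ b, z b := by rw [hx, one_mul]
    exact (hsum p hp.2).trans (hsum q hq.2).symm
  · intro s
    set slow := s.filter (fun x : Fin d × (Fin (n+1) × (Fin (n+1-1) → Fin d)) =>
      (x.2.1 : ℕ) < n) with hslow
    set shigh := s.filter (fun x : Fin d × (Fin (n+1) × (Fin (n+1-1) → Fin d)) =>
      ¬ (x.2.1 : ℕ) < n) with hshigh
    set Φ : Fin d × (Fin (n+1) × (Fin (n+1-1) → Fin d)) →
        Fin d × (Fin (n+1) × (Fin (n+1-1) → Fin d)) := fun x =>
      if h : (x.2.1 : ℕ) < n then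
        (x.2.2 ⟨n - 1 - x.2.1, by omega⟩,
          (⟨(x.2.1:ℕ) + 1, by omega⟩,
            Function.update x.2.2 ⟨n - 1 - x.2.1, by omega⟩ x.1))
      else x with hΦ
    have hΦspec : ∀ (a : Fin d) (i : Fin (n+1)) (f : Fin (n+1-1) → Fin d)
        (h : (i:ℕ) < n), Φ (a, (i, f)) =
        (f ⟨n-1-i, by omega⟩, (⟨(i:ℕ)+1, by omega⟩,
          Function.update f ⟨n-1-i, by omega⟩ a)) :=
      fun a i f h => dif_pos h
    -- injectivity of Φ on slow
    have hΦinj : ∀ x ∈ slow, ∀ y ∈ slow, Φ x = Φ y → x = y := by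
      rintro ⟨a, i, f⟩ hx ⟨b, i', g⟩ hy hxy
      have hx' : (i:ℕ) < n := (Finset.mem_filter.mp hx).2
      have hy' : (i':ℕ) < n := (Finset.mem_filter.mp hy).2
      rw [hΦspec a i f hx', hΦspec b i' g hy'] at hxy
      rw [Prod.mk.injEq, Prod.mk.injEq] at hxy
      obtain ⟨e1, e2, e3⟩ := hxy
      have hii : i = i' := by
        have h4 := congrArg Fin.val e2
        simp only [Fin.val_mk] at h4
        exact Fin.ext (by omega)
      subst hii
      have e3' : ∀ jv : ℕ, ∀ hjv : jv < n+1-1,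
          (if jv = n-1-(i:ℕ) then a else f ⟨jv, hjv⟩)
          = (if jv = n-1-(i:ℕ) then b else g ⟨jv, hjv⟩) := by
        intro jv hjv
        have h4 := congrFun e3 ⟨jv, hjv⟩
        simpa [Function.update_apply, Fin.ext_iff] using h4
      have hab : a = b := by
        have h5 := e3' (n-1-(i:ℕ)) (by omega)
        simpa using h5
      have hfg : f = g := by
        funext j
        rcases j with ⟨jv, hjv⟩
        by_cases hj2 : jv = n-1-(i:ℕ)
        · subst hj2; exact e1
        · have h5 := e3' jv hjv
          simpa [hj2] using h5
      rw [hab, hfg]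
    -- the cons map on the high block
    set ψ : Fin d × (Fin (n+1) × (Fin (n+1-1) → Fin d)) → (Fin (n+1) → Fin d) :=
      fun x => (Fin.cons x.1 x.2.2 : Fin (n+1) → Fin d) with hψ
    have hψinj : ∀ x ∈ shigh, ∀ y ∈ shigh, ψ x = ψ y → x = y := by
      rintro ⟨a, i, f⟩ hx ⟨b, i', g⟩ hy hxy
      have hx' : ¬ (i:ℕ) < n := (Finset.mem_filter.mp hx).2
      have hy' : ¬ (i':ℕ) < n := (Finset.mem_filter.mp hy).2
      have hii : i = i' := Fin.ext (by have := i.isLt; have := i'.isLt; omega)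
      have hab : a = b := by
        have h4 := congrFun hxy 0
        simpa [hψ] using h4
      have hfg : f = g := by
        funext j
        have h4 := congrFun hxy ((j : Fin (n+1-1)).succ)
        simpa [hψ] using h4
      rw [hab, hii, hfg]
    obtain ⟨t', ht'c, ht's⟩ := hmaj.2 (shigh.image ψ)
    set χ : (Fin (n+1) → Fin d) → Fin d × (Fin (n+1) × (Fin (n+1-1) → Fin d)) :=
      fun g => (g 0, ((0 : Fin (n+1)), fun j => g j.succ)) with hχ
    have hχinj : Function.Injective χ := by
      intro g g' h
      rw [Prod.mk.injEq, Prod.mk.injEq] at h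
      obtain ⟨h0, -, hs⟩ := h
      funext j
      rcases Fin.eq_zero_or_eq_succ j with rfl | ⟨j', rfl⟩
      · exact h0
      · exact congrFun hs j'
    have hdisj : Disjoint (slow.image Φ) (t'.image χ) := by
      rw [Finset.disjoint_left]
      rintro x hx1 hx2
      obtain ⟨y, hy, rfl⟩ := Finset.mem_image.mp hx1
      obtain ⟨g, hg, hgx⟩ := Finset.mem_image.mp hx2
      obtain ⟨a, i, f⟩ := y
      have hy' : (i:ℕ) < n := (Finset.mem_filter.mp hy).2
      have h1 : ((Φ (a, (i, f))).2.1 : ℕ) = (i:ℕ) + 1 := by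
        rw [hΦspec a i f hy']
      have h2 : ((χ g).2.1 : ℕ) = 0 := rfl
      rw [← hgx] at h1
      rw [h2] at h1
      omega
    refine ⟨slow.image Φ ∪ t'.image χ, ?_, ?_⟩
    · rw [Finset.card_union_of_disjoint hdisj, Finset.card_image_of_injOn hΦinj,
        Finset.card_image_of_injective _ hχinj, ht'c,
        Finset.card_image_of_injOn hψinj]
      rw [hslow, hshigh]
      exact Finset.card_filter_add_card_filter_not _
    · rw [Finset.sum_union hdisj]
      have hsplit : ∑ x ∈ s, tens q z x
          = ∑ x ∈ slow, tens q z x + ∑ x ∈ shigh, tens q z x := by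
        rw [hslow, hshigh]
        exact (Finset.sum_filter_add_sum_filter_not s _ _).symm
      rw [hsplit]
      have hA : ∑ x ∈ slow, tens q z x = ∑ x ∈ slow.image Φ, tens p z x := by
        rw [Finset.sum_image hΦinj]
        apply Finset.sum_congr rfl
        rintro ⟨a, i, f⟩ hx
        have hx' : (i:ℕ) < n := (Finset.mem_filter.mp hx).2
        rw [hΦspec a i f hx']
        exact (duan_step p q a i f hx').symm
      have hB : ∑ x ∈ shigh, tens q z x ≤ ∑ x ∈ t'.image χ, tens p z x := by
        have hB1 : ∑ x ∈ shigh, tens q z x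
            = (1/(n+1:ℝ)) * ∑ g ∈ shigh.image ψ, tpow q (n+1) g := by
          rw [Finset.sum_image hψinj, Finset.mul_sum]
          apply Finset.sum_congr rfl
          rintro ⟨a, i, f⟩ hx
          have hx' : ¬ (i:ℕ) < n := (Finset.mem_filter.mp hx).2
          exact duan_blockn p q a i f hx'
        have hB2 : ∑ x ∈ t'.image χ, tens p z x
            = (1/(n+1:ℝ)) * ∑ g ∈ t', tpow p (n+1) g := by
          rw [Finset.sum_image (fun x _ y _ h => hχinj h), Finset.mul_sum]
          apply Finset.sum_congr rfl
          intro g hg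
          exact duan_block0 p q g
        rw [hB1, hB2]
        apply mul_le_mul_of_nonneg_left ht's
        positivity
      linarith [hA, hB]
end

section
/- Telescoping identity for the Duan state: p ⊗ z_k^D(p,q) and q ⊗ z_k^D(p,q) differ only in one block, namely p ⊗ z_k^D(p,q) = (1/k)[p^{⊗k} ⊕ B] and q ⊗ z_k^D(p,q) = (1/k)[q^{⊗k} ⊕ B] up to a permutation, where B = ⊕_{i=2}^{k}(p^{⊗(k-i+1)} ⊗ q^{⊗(i-1)}). -/
open Finset

/-- The common block `B = ⊕_{i=2}^{k} p^{⊗(k-i+1)} ⊗ q^{⊗(i-1)}` (scaled by `1/k`);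
block `i : Fin (k-1)` is `(1/k) · p^{⊗(k-1-i)} ⊗ q^{⊗(i+1)}`. -/
noncomputable def duanBlockB {d : ℕ} (k : ℕ) (p q : Fin d → ℝ) :
    Fin (k - 1) × (Fin k → Fin d) → ℝ :=
  fun x => (1 / (k : ℝ)) *
    ∏ j : Fin k, if (j : ℕ) < k - 1 - (x.1 : ℕ) then p (x.2 j) else q (x.2 j)

/-- Telescoping identity for the Duan state: up to permutations of
the entries, `p ⊗ z_k^D(p,q) = (1/k)[p^{⊗k} ⊕ B]` and
`q ⊗ z_k^D(p,q) = (1/k)[q^{⊗k} ⊕ B]`, where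
`B = ⊕_{i=2}^{k} p^{⊗(k-i+1)} ⊗ q^{⊗(i-1)}`. -/
theorem duan_telescope {d : ℕ} (k : ℕ) (hk : 1 ≤ k) (p q : Fin d → ℝ)
    (hp : IsProbVec p) (hq : IsProbVec q) :
    ∃ (e₁ e₂ : (Fin d × (Fin k × (Fin (k - 1) → Fin d))) ≃
        ((Fin k → Fin d) ⊕ (Fin (k - 1) × (Fin k → Fin d)))),
      (∀ y, tens p (duan k p q) (e₁.symm y) =
        Sum.elim (fun f => (1 / (k : ℝ)) * tpow p k f) (duanBlockB k p q) y) ∧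
      (∀ y, tens q (duan k p q) (e₂.symm y) =
        Sum.elim (fun f => (1 / (k : ℝ)) * tpow q k f) (duanBlockB k p q) y) := by
  obtain ⟨n, rfl⟩ : ∃ n, k = n + 1 := ⟨k - 1, (Nat.succ_pred_eq_of_pos hk).symm⟩
  have hd : duan (n+1) p q = fun x : Fin (n+1) × (Fin n → Fin d) =>
      (1 / (((n+1) : ℕ) : ℝ)) *
        ∏ j : Fin n, if (j : ℕ) < n - (x.1 : ℕ) then p (x.2 j) else q (x.2 j) := rfl
  have hb : duanBlockB (n+1) p q = fun x : Fin n × (Fin (n+1) → Fin d) =>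
      (1 / (((n+1) : ℕ) : ℝ)) *
        ∏ j : Fin (n+1), if (j : ℕ) < n - (x.1 : ℕ) then p (x.2 j) else q (x.2 j) := rfl
  show ∃ (e₁ e₂ : (Fin d × (Fin (n+1) × (Fin n → Fin d))) ≃
        ((Fin (n+1) → Fin d) ⊕ (Fin n × (Fin (n+1) → Fin d)))),
      (∀ y, tens p (duan (n+1) p q) (e₁.symm y) =
        Sum.elim (fun f => (1 / (((n+1) : ℕ) : ℝ)) * tpow p (n+1) f) (duanBlockB (n+1) p q) y) ∧
      (∀ y, tens q (duan (n+1) p q) (e₂.symm y) =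
        Sum.elim (fun f => (1 / (((n+1) : ℕ) : ℝ)) * tpow q (n+1) f) (duanBlockB (n+1) p q) y)
  refine ⟨Equiv.symm ⟨fun y => Sum.elim (fun f => (f 0, 0, Fin.tail f))
      (fun x => (x.2 0, x.1.succ, Fin.tail x.2)) y,
    fun z => Fin.cases (Sum.inl (Fin.cons z.1 z.2.2))
      (fun m => Sum.inr (m, Fin.cons z.1 z.2.2)) z.2.1, ?_, ?_⟩,
    Equiv.symm ⟨fun y => Sum.elim (fun f => (f (Fin.last n), Fin.last n, Fin.init f))
      (fun x => (x.2 (Fin.last n), x.1.castSucc, Fin.init x.2)) y,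
    fun z => Fin.lastCases (Sum.inl (Fin.snoc z.2.2 z.1))
      (fun m => Sum.inr (m, Fin.snoc z.2.2 z.1)) z.2.1, ?_, ?_⟩, ?_, ?_⟩
  · rintro (f | ⟨m, f⟩) <;> simp [Fin.cons_self_tail]
  · rintro ⟨a, i, g⟩
    induction i using Fin.cases <;> simp [Fin.tail_cons]
  · rintro (f | ⟨m, f⟩) <;> simp [Fin.snoc_init_self]
  · rintro ⟨a, i, g⟩
    induction i using Fin.lastCases <;> simp [Fin.init_snoc]
  · rintro (f | ⟨m, f⟩)
    · simp only [Equiv.symm_symm, Equiv.coe_fn_mk, Sum.elim_inl, tens, hd, tpow]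
      simp only [Fin.val_zero, Nat.sub_zero, Fin.is_lt, if_true]
      rw [Fin.prod_univ_succ]
      simp [Fin.tail]; ring
    · simp only [Equiv.symm_symm, Equiv.coe_fn_mk, Sum.elim_inr, tens, hd, hb]
      rw [Fin.prod_univ_succ]
      have hm := m.isLt
      have h0 : ((0 : Fin (n+1)) : ℕ) < n - (m : ℕ) := by
        simp only [Fin.val_zero]; omega
      rw [if_pos h0]
      have : ∀ j : Fin n,
          (if ((j.succ : Fin (n+1)) : ℕ) < n - (m : ℕ) then p (f j.succ) else q (f j.succ))
          = (if (j : ℕ) < n - ((m.succ : Fin (n+1)) : ℕ) then p (Fin.tail f j) else q (Fin.tail f j)) := by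
        intro j
        have hiff : (((j.succ : Fin (n+1)) : ℕ) < n - (m : ℕ)) ↔
            ((j : ℕ) < n - ((m.succ : Fin (n+1)) : ℕ)) := by
          simp only [Fin.val_succ]; omega
        rw [if_congr hiff rfl rfl]; rfl
      rw [Finset.prod_congr rfl (fun j _ => this j)]
      ring
  · rintro (f | ⟨m, f⟩)
    · simp only [Equiv.symm_symm, Equiv.coe_fn_mk, Sum.elim_inl, tens, hd, tpow]
      have h1 : n - ((Fin.last n : Fin (n+1)) : ℕ) = 0 := by simp
      rw [h1]
      simp only [Nat.not_lt_zero, if_false]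
      rw [Fin.prod_univ_castSucc]
      simp [Fin.init]; ring
    · simp only [Equiv.symm_symm, Equiv.coe_fn_mk, Sum.elim_inr, tens, hd, hb]
      rw [Fin.prod_univ_castSucc]
      have hm := m.isLt
      have hlast : ¬ (((Fin.last n : Fin (n+1)) : ℕ) < n - (m : ℕ)) := by
        simp only [Fin.val_last]; omega
      rw [if_neg hlast]
      have : ∀ j : Fin n,
          (if ((j.castSucc : Fin (n+1)) : ℕ) < n - (m : ℕ) then p (f j.castSucc) else q (f j.castSucc))
          = (if (j : ℕ) < n - ((m.castSucc : Fin (n+1)) : ℕ) then p (Fin.init f j) else q (Fin.init f j)) := by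
        intro j
        have hiff : (((j.castSucc : Fin (n+1)) : ℕ) < n - (m : ℕ)) ↔
            ((j : ℕ) < n - ((m.castSucc : Fin (n+1)) : ℕ)) := by
          simp only [Fin.coe_castSucc]
        rw [if_congr hiff rfl rfl]; rfl
      rw [Finset.prod_congr rfl (fun j _ => this j)]
      ring
end

section
/- Classical convex-split bound: Let p and q be probability distributions on a finite set with supp(p) ⊆ supp(q), and let λ = max_i p_i/q_i (the exponential of the max-relative divergence). Define the mixture M on the (m+1)-fold product space as M = (1/(m+1)) Σ_{j=0}^{m} q^{⊗j} ⊗ p ⊗ q^{⊗(m-j)}. Then the total variation distance between M and q^{⊗(m+1)} satisfies ‖M − q^{⊗(m+1)}‖_1^2 ≤ λ/(m+1), where ‖·‖_1 denotes half the ℓ1 distance (total variation). -/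
open Finset

/-- Total variation distance: half the ℓ¹ distance. -/
noncomputable def tvDist {ι : Type*} [Fintype ι] (a b : ι → ℝ) : ℝ :=
  (1 / 2) * ∑ i, |a i - b i|

-- `λ = max_i p_i / q_i` (with the convention `0/0 = 0`), i.e. `2^{D_∞(p‖q)}`.
open Classical in
noncomputable def maxRatio {S : Type*} [Fintype S] [Nonempty S] (p q : S → ℝ) : ℝ :=
  Finset.univ.sup' Finset.univ_nonempty (fun i => if q i = 0 then 0 else p i / q i)

/-- The convex-split mixture `M = (1/(m+1)) Σ_{j=0}^{m} q^{⊗j} ⊗ p ⊗ q^{⊗(m-j)}`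
on the `(m+1)`-fold product space. -/
noncomputable def convexSplitM {S : Type*} [Fintype S] (m : ℕ)
    (p q : S → ℝ) : (Fin (m + 1) → S) → ℝ :=
  fun f => (1 / ((m : ℝ) + 1)) *
    ∑ j : Fin (m + 1), p (f j) * ∏ i ∈ Finset.univ.erase j, q (f i)

/-! Write `Q = q^{⊗(m+1)}` and `r = p / q` for the likelihood ratio. Then
`M = Q · (1/(m+1)) Σⱼ r(fⱼ)`, so Cauchy–Schwarz gives
`‖M − Q‖₁² ≤ ¼ E_Q[((1/(m+1)) Σⱼ (r(fⱼ) − 1))²]`. Under `Q` the `r(fⱼ) − 1` are i.i.d. and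
centred, so the right side is `χ²(p‖q) / (4(m+1))`, and `χ²(p‖q) = E_p[r] − 1 ≤ λ − 1`. -/

section ProductMeasure

variable {ι S : Type*} [Fintype ι] [DecidableEq ι] [Fintype S] {w : S → ℝ}

theorem IsProbVec.pi_prod (hw : IsProbVec w) : IsProbVec (fun f : ι → S => ∏ i, w (f i)) :=
  ⟨fun _ => prod_nonneg fun i _ => hw.1 _, by rw [← Fintype.prod_sum]; simp [hw.2]⟩

theorem sum_pi_prod_mul_prod (w : S → ℝ) (u : ι → S → ℝ) :
    ∑ f : ι → S, (∏ i, w (f i)) * ∏ i, u i (f i) = ∏ i, ∑ s, w s * u i s := by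
  simp only [Fintype.prod_sum, prod_mul_distrib]

theorem sum_pi_prod_mul_apply (hw : ∑ s, w s = 1) (g : S → ℝ) (j : ι) :
    ∑ f : ι → S, (∏ i, w (f i)) * g (f j) = ∑ s, w s * g s := by
  have h := sum_pi_prod_mul_prod (ι := ι) w (Pi.mulSingle j g)
  rw [Fintype.prod_eq_single j fun i hi => by simp [hi, hw], Pi.mulSingle_eq_same] at h
  have hprod (f : ι → S) : ∏ i, (Pi.mulSingle j g : ι → S → ℝ) i (f i) = g (f j) := by
    rw [Fintype.prod_eq_single j fun i hi => by simp [hi], Pi.mulSingle_eq_same]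
  simpa only [hprod] using h

theorem sum_pi_prod_mul_apply_mul_apply (hw : ∑ s, w s = 1) (g h : S → ℝ) {j k : ι}
    (hjk : j ≠ k) :
    ∑ f : ι → S, (∏ i, w (f i)) * (g (f j) * h (f k)) = (∑ s, w s * g s) * ∑ s, w s * h s := by
  have H := sum_pi_prod_mul_prod (ι := ι) w (Pi.mulSingle j g * Pi.mulSingle k h)
  rw [Fintype.prod_eq_mul j k hjk fun i hi => by simp [hi.1, hi.2, hw]] at H
  have hprod (f : ι → S) :
      ∏ i, (Pi.mulSingle j g * Pi.mulSingle k h : ι → S → ℝ) i (f i) = g (f j) * h (f k) := by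
    rw [Fintype.prod_eq_mul j k hjk fun i hi => by simp [hi.1, hi.2]]
    simp [hjk, hjk.symm]
  simp only [hprod] at H
  simpa [hjk, hjk.symm] using H

theorem sum_pi_prod_mul_sq_sum_apply (hw : ∑ s, w s = 1) {g : S → ℝ}
    (hg : ∑ s, w s * g s = 0) :
    ∑ f : ι → S, (∏ i, w (f i)) * (∑ j, g (f j)) ^ 2 =
      Fintype.card ι * ∑ s, w s * g s ^ 2 := by
  have hdiag (j : ι) :
      ∑ f : ι → S, (∏ i, w (f i)) * (g (f j) * g (f j)) = ∑ s, w s * g s ^ 2 := by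
    simpa only [← sq] using sum_pi_prod_mul_apply hw (fun s => g s ^ 2) j
  calc ∑ f : ι → S, (∏ i, w (f i)) * (∑ j, g (f j)) ^ 2
      = ∑ j, ∑ k, ∑ f : ι → S, (∏ i, w (f i)) * (g (f j) * g (f k)) := by
        simp_rw [sq, sum_mul_sum, mul_sum]
        rw [sum_comm]
        exact sum_congr rfl fun j _ => sum_comm
    _ = ∑ j : ι, ∑ s, w s * g s ^ 2 := by
        refine sum_congr rfl fun j _ => ?_
        rw [sum_eq_single j (fun k _ hkj => by
          rw [sum_pi_prod_mul_apply_mul_apply hw g g hkj.symm, hg, zero_mul]) (by simp), hdiag]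
    _ = Fintype.card ι * ∑ s, w s * g s ^ 2 := by simp

end ProductMeasure

theorem sq_sum_mul_abs_le {ι : Type*} (s : Finset ι) {w : ι → ℝ} (hw : ∀ i ∈ s, 0 ≤ w i)
    (x : ι → ℝ) : (∑ i ∈ s, w i * |x i|) ^ 2 ≤ (∑ i ∈ s, w i) * ∑ i ∈ s, w i * x i ^ 2 :=
  sum_sq_le_sum_mul_sum_of_sq_le_mul s hw
    (fun i hi => mul_nonneg (hw i hi) (sq_nonneg _))
    (fun i _ => le_of_eq (by rw [mul_pow, sq_abs]; ring))

theorem tvDist_sq_le {ι : Type*} [Fintype ι] {a b : ι → ℝ} (hb : IsProbVec b) (x : ι → ℝ)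
    (hab : ∀ i, a i - b i = b i * x i) : tvDist a b ^ 2 ≤ (∑ i, b i * x i ^ 2) / 4 := by
  have hcs := sq_sum_mul_abs_le univ (fun i _ => hb.1 i) x
  rw [hb.2, one_mul] at hcs
  have habs (i : ι) : |a i - b i| = b i * |x i| := by rw [hab, abs_mul, abs_of_nonneg (hb.1 i)]
  rw [tvDist, mul_pow, sum_congr rfl fun i _ => habs i]
  linarith

section LikelihoodRatio

variable {S : Type*} {p q : S → ℝ}

-- Classical decidability, as in `maxRatio`, so that `maxRatio p q` unfolds to the supremum of
-- `likelihoodRatio p q`.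
open Classical in
noncomputable def likelihoodRatio (p q : S → ℝ) (i : S) : ℝ :=
  if q i = 0 then 0 else p i / q i

theorem mul_likelihoodRatio (hsupp : ∀ i, q i = 0 → p i = 0) (i : S) :
    q i * likelihoodRatio p q i = p i := by
  by_cases h : q i = 0
  · simp [likelihoodRatio, h, hsupp i h]
  · rw [likelihoodRatio, if_neg h, mul_div_cancel₀ _ h]

variable [Fintype S]

theorem likelihoodRatio_le_maxRatio [Nonempty S] (i : S) :
    likelihoodRatio p q i ≤ maxRatio p q :=
  le_sup' (likelihoodRatio p q) (mem_univ i)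

theorem sum_mul_likelihoodRatio_sub_one (hp : IsProbVec p) (hq : IsProbVec q)
    (hsupp : ∀ i, q i = 0 → p i = 0) : ∑ i, q i * (likelihoodRatio p q i - 1) = 0 := by
  simp [mul_sub, mul_likelihoodRatio hsupp, hp.2, hq.2]

theorem sum_mul_sq_likelihoodRatio_sub_one_le [Nonempty S] (hp : IsProbVec p) (hq : IsProbVec q)
    (hsupp : ∀ i, q i = 0 → p i = 0) :
    ∑ i, q i * (likelihoodRatio p q i - 1) ^ 2 ≤ maxRatio p q - 1 := by
  set r := likelihoodRatio p q
  have hexpand (i : S) : q i * (r i - 1) ^ 2 = p i * r i - 2 * p i + q i := by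
    rw [← mul_likelihoodRatio hsupp i]; ring
  have hpr : ∑ i, p i * r i ≤ maxRatio p q := by
    calc ∑ i, p i * r i ≤ ∑ i, p i * maxRatio p q :=
          sum_le_sum fun i _ => mul_le_mul_of_nonneg_left (likelihoodRatio_le_maxRatio i) (hp.1 i)
      _ = maxRatio p q := by rw [← sum_mul, hp.2, one_mul]
  simp only [hexpand, sum_add_distrib, sum_sub_distrib, ← mul_sum, hp.2, hq.2]
  linarith

end LikelihoodRatio

theorem convexSplitM_sub_prod {S : Type*} [Fintype S] {p q : S → ℝ}
    (hsupp : ∀ i, q i = 0 → p i = 0) (m : ℕ) (f : Fin (m + 1) → S) :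
    convexSplitM m p q f - ∏ i, q (f i) =
      (∏ i, q (f i)) * ((1 / ((m : ℝ) + 1)) * ∑ j, (likelihoodRatio p q (f j) - 1)) := by
  have hterm (j : Fin (m + 1)) :
      p (f j) * ∏ i ∈ univ.erase j, q (f i) = (∏ i, q (f i)) * likelihoodRatio p q (f j) := by
    rw [← mul_prod_erase univ (fun i => q (f i)) (mem_univ j), ← mul_likelihoodRatio hsupp (f j)]
    ring
  rw [convexSplitM, sum_congr rfl fun j _ => hterm j, ← mul_sum, sum_sub_distrib]
  simp only [sum_const, card_univ, Fintype.card_fin, nsmul_eq_mul]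
  field_simp
  push_cast
  ring

/-- Classical convex-split bound:
`‖M − q^{⊗(m+1)}‖₁² ≤ λ/(m+1)` where `λ = max_i p_i/q_i`. -/
theorem convex_split_bound {S : Type*} [Fintype S] [Nonempty S]
    (p q : S → ℝ) (hp : IsProbVec p) (hq : IsProbVec q)
    (hsupp : ∀ i, q i = 0 → p i = 0) (m : ℕ) :
    (tvDist (convexSplitM m p q) (fun f => ∏ i, q (f i))) ^ 2 ≤
      maxRatio p q / ((m : ℝ) + 1) := by
  set g : S → ℝ := fun s => likelihoodRatio p q s - 1
  set χ := ∑ s, q s * g s ^ 2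
  have hχ : χ ≤ maxRatio p q - 1 := sum_mul_sq_likelihoodRatio_sub_one_le hp hq hsupp
  have hχ0 : 0 ≤ χ := sum_nonneg fun s _ => mul_nonneg (hq.1 s) (sq_nonneg _)
  have hvar :
      ∑ f : Fin (m + 1) → S, (∏ i, q (f i)) * (∑ j, g (f j)) ^ 2 = ((m : ℝ) + 1) * χ := by
    rw [sum_pi_prod_mul_sq_sum_apply hq.2 (sum_mul_likelihoodRatio_sub_one hp hq hsupp),
      Fintype.card_fin]
    push_cast
    rfl
  calc tvDist (convexSplitM m p q) (fun f => ∏ i, q (f i)) ^ 2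
      ≤ (∑ f : Fin (m + 1) → S,
          (∏ i, q (f i)) * ((1 / ((m : ℝ) + 1)) * ∑ j, g (f j)) ^ 2) / 4 :=
        tvDist_sq_le hq.pi_prod _ (convexSplitM_sub_prod hsupp m)
    _ = χ / (4 * ((m : ℝ) + 1)) := by
        simp_rw [mul_pow, mul_left_comm _ ((1 / ((m : ℝ) + 1)) ^ 2), ← mul_sum, hvar]
        field_simp
    _ ≤ maxRatio p q / ((m : ℝ) + 1) := by
        rw [div_le_div_iff₀ (by positivity) (by positivity)]
        nlinarith
end

section
/- Embedded majorization equals d-majorization (thermo-majorization for rational Gibbs states): for probability vectors p, q of dimension n and rational Gibbs vector g = (d_1/D,...,d_n/D), Γ_d(p) majorizes Γ_d(q) if and only if there exists a stochastic matrix T with T g = g and T p = q. -/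
open Finset

/-- The embedding map `Γ_d`: the `i`-th block consists of `d i` copies of `x i / d i`. -/
noncomputable def embed {n : ℕ} (d : Fin n → ℕ) (x : Fin n → ℝ) :
    (Σ i : Fin n, Fin (d i)) → ℝ :=
  fun s => x s.1 / (d s.1 : ℝ)


namespace EmbedMajAux

variable {N : ℕ}

/-- decreasing vector on `Fin N` -/
def Anti (a : Fin N → ℝ) : Prop := ∀ i j : Fin N, i ≤ j → a j ≤ a i

/-- doubly stochastic (rows and columns sum to 1, nonneg) -/
def DS {ι : Type*} [Fintype ι] (M : Matrix ι ι ℝ) : Prop :=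
  (∀ i j, 0 ≤ M i j) ∧ (∀ i, ∑ j, M i j = 1) ∧ (∀ j, ∑ i, M i j = 1)

lemma DS.one {ι : Type*} [Fintype ι] [DecidableEq ι] : DS (1 : Matrix ι ι ℝ) := by
  refine ⟨fun i j => ?_, fun i => ?_, fun j => ?_⟩
  · rw [Matrix.one_apply]; positivity
  · simp [Matrix.one_apply]
  · simp [Matrix.one_apply]

lemma DS.mul {ι : Type*} [Fintype ι] {M₁ M₂ : Matrix ι ι ℝ} (h₁ : DS M₁) (h₂ : DS M₂) :
    DS (M₁ * M₂) := by
  refine ⟨fun i j => ?_, fun i => ?_, fun j => ?_⟩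
  · rw [Matrix.mul_apply]
    exact Finset.sum_nonneg fun l _ => mul_nonneg (h₁.1 i l) (h₂.1 l j)
  · simp only [Matrix.mul_apply]
    rw [Finset.sum_comm]
    simp only [← Finset.mul_sum]
    simp [h₂.2.1, h₁.2.1 i]
  · simp only [Matrix.mul_apply]
    rw [Finset.sum_comm]
    simp only [← Finset.sum_mul]
    simp [h₁.2.2, h₂.2.2 j]

/-- sorting a vector in decreasing order -/
lemma exists_sort (x : Fin N → ℝ) : ∃ σ : Equiv.Perm (Fin N), Anti (fun i => x (σ i)) := by
  refine ⟨Tuple.sort (fun i => -x i), fun i j hij => ?_⟩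
  have := Tuple.monotone_sort (fun i => -x i) hij
  simpa using this

/-- the prefix set -/
def P (N m : ℕ) : Finset (Fin N) := univ.filter (fun i => (i : ℕ) < m)

lemma mem_P {m : ℕ} {i : Fin N} : i ∈ P N m ↔ (i : ℕ) < m := by simp [P]

lemma P_eq_map {m : ℕ} (h : m ≤ N) :
    P N m = Finset.map ⟨Fin.castLE h, (Fin.castLE_injective h)⟩ univ := by
  ext i
  simp only [mem_P, Finset.mem_map, Finset.mem_univ, true_and, Function.Embedding.coeFn_mk]
  constructor
  · intro hi; exact ⟨⟨(i : ℕ), hi⟩, by ext; simp⟩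
  · rintro ⟨j, rfl⟩; exact j.2

lemma card_P {m : ℕ} (h : m ≤ N) : (P N m).card = m := by
  rw [P_eq_map h, Finset.card_map, Finset.card_univ, Fintype.card_fin]

lemma P_all {m : ℕ} (h : N ≤ m) : P N m = univ := by
  ext i; simp only [mem_P, Finset.mem_univ, iff_true]
  exact lt_of_lt_of_le i.2 h

/-- any set-sum is at most the prefix sum of the same cardinality, for decreasing vectors -/
lemma sum_le_prefix (a : Fin N → ℝ) (ha : Anti a) (s : Finset (Fin N)) :
    ∑ i ∈ s, a i ≤ ∑ i ∈ P N s.card, a i := by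
  have hcard : s.card ≤ N := by
    simpa using Finset.card_le_univ s
  set m := s.card with hm
  let ι : Fin m ↪o Fin N := s.orderEmbOfFin hm.symm
  have key : ∀ i : Fin m, (i : ℕ) ≤ (ι i : ℕ) := by
    have : ∀ t : ℕ, ∀ i : Fin m, (i : ℕ) = t → t ≤ (ι i : ℕ) := by
      intro t
      induction t with
      | zero => intro i _; exact Nat.zero_le _
      | succ t ih =>
        intro i hi
        have htm : t < m := by omega
        have h1 := ih ⟨t, htm⟩ rfl
        have h2 : ι ⟨t, htm⟩ < ι i := by
          apply ι.strictMono
          rw [Fin.lt_def]; simp [hi]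
        rw [Fin.lt_def] at h2
        omega
    intro i; exact this (i : ℕ) i rfl
  have hsmap : s = Finset.map ι.toEmbedding univ := by
    ext i
    simp only [Finset.mem_map, Finset.mem_univ, true_and]
    have := Finset.range_orderEmbOfFin s hm.symm
    constructor
    · intro hi
      have : i ∈ Set.range (s.orderEmbOfFin hm.symm) := this ▸ (by exact_mod_cast hi)
      obtain ⟨j, hj⟩ := this
      exact ⟨j, hj⟩
    · rintro ⟨j, rfl⟩
      have h3 : (ι j : Fin N) ∈ (s : Set (Fin N)) := this ▸ ⟨j, rfl⟩
      exact_mod_cast h3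
  have hsum : ∑ i ∈ s, a i = ∑ i : Fin m, a (ι i) := by
    conv_lhs => rw [hsmap]
    rw [Finset.sum_map]
    rfl
  rw [hsum, P_eq_map hcard, Finset.sum_map]
  apply Finset.sum_le_sum
  intro i _
  apply ha
  rw [Fin.le_def]
  simpa using key i

/-- dot product with sub-unital weights summing to `m` is at most top-`m` sum -/
lemma dot_le_prefix (a c : Fin N → ℝ) (ha : Anti a) (m : ℕ) (hmN : m ≤ N)
    (hc0 : ∀ i, 0 ≤ c i) (hc1 : ∀ i, c i ≤ 1) (hcs : ∑ i, c i = (m : ℝ)) :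
    ∑ i, c i * a i ≤ ∑ i ∈ P N m, a i := by
  rcases Nat.eq_zero_or_pos m with rfl | hm
  · have hz : ∀ i ∈ univ, c i = 0 := by
      rw [← Finset.sum_eq_zero_iff_of_nonneg (fun i _ => hc0 i)]
      simpa using hcs
    have : ∀ i ∈ univ, c i * a i = 0 := fun i hi => by rw [hz i hi, zero_mul]
    rw [Finset.sum_congr rfl this]
    simp [P]
  · have hm1 : m - 1 < N := by omega
    set θ := a ⟨m - 1, hm1⟩ with hθ
    have key : ∑ i, c i * a i - ∑ i ∈ P N m, a i ≤ 0 := by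
      have h1 : ∑ i ∈ P N m, a i = ∑ i, (if i ∈ P N m then (1 : ℝ) else 0) * a i := by
        simp only [ite_mul, one_mul, zero_mul]
        rw [Finset.sum_ite_mem, Finset.univ_inter]
      rw [h1, ← Finset.sum_sub_distrib]
      have h2 : ∀ i ∈ univ, c i * a i - (if i ∈ P N m then (1:ℝ) else 0) * a i
          ≤ (c i - if i ∈ P N m then (1:ℝ) else 0) * θ := by
        intro i _
        rw [← sub_mul]
        by_cases hi : i ∈ P N m
        · simp only [hi, if_true]
          have hiθ : θ ≤ a i := by
            apply ha
            rw [Fin.le_def]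
            have := mem_P.mp hi
            simp; omega
          have : c i - 1 ≤ 0 := by linarith [hc1 i]
          nlinarith
        · simp only [hi, if_false]
          have hiθ : a i ≤ θ := by
            apply ha
            rw [Fin.le_def]
            have : ¬ ((i : ℕ) < m) := fun h => hi (mem_P.mpr h)
            simp; omega
          have : 0 ≤ c i := hc0 i
          nlinarith
      calc ∑ i, (c i * a i - (if i ∈ P N m then (1:ℝ) else 0) * a i)
          ≤ ∑ i, (c i - if i ∈ P N m then (1:ℝ) else 0) * θ := Finset.sum_le_sum h2
        _ = (∑ i, (c i - if i ∈ P N m then (1:ℝ) else 0)) * θ := by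
            rw [Finset.sum_mul]
        _ = 0 := by
            rw [Finset.sum_sub_distrib, hcs]
            have : ∑ i, (if i ∈ P N m then (1:ℝ) else 0) = (m : ℝ) := by
              rw [Finset.sum_ite_mem]
              simp [card_P hmN]
            rw [this]; ring
    linarith

/-- general index: weighted sum bounded by some `m`-set sum -/
lemma dot_le_set {ι : Type*} [Fintype ι] [DecidableEq ι] (x c : ι → ℝ) (m : ℕ)
    (hm : m ≤ Fintype.card ι) (hc0 : ∀ i, 0 ≤ c i) (hc1 : ∀ i, c i ≤ 1)
    (hcs : ∑ i, c i = (m : ℝ)) :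
    ∃ t : Finset ι, t.card = m ∧ ∑ i, c i * x i ≤ ∑ i ∈ t, x i := by
  set N := Fintype.card ι with hN
  let e : ι ≃ Fin N := Fintype.equivFin ι
  obtain ⟨σ, hσ⟩ := exists_sort (fun i => x (e.symm i))
  let φ : Fin N ≃ ι := σ.trans e.symm
  set a : Fin N → ℝ := fun i => x (φ i) with hadef
  set c' : Fin N → ℝ := fun i => c (φ i) with hcdef
  have hc's : ∑ i, c' i = (m : ℝ) := by
    rw [← hcs]; exact Equiv.sum_comp φ c
  have hanti : Anti a := hσ
  have hdot := dot_le_prefix a c' hanti m hm (fun i => hc0 _) (fun i => hc1 _) hc's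
  refine ⟨(P N m).map φ.toEmbedding, ?_, ?_⟩
  · rw [Finset.card_map, card_P hm]
  · rw [Finset.sum_map]
    have : ∑ i, c i * x i = ∑ i, c' i * a i := (Equiv.sum_comp φ (fun l => c l * x l)).symm
    rw [this]
    exact hdot

/-- doubly stochastic image is majorized -/
lemma maj_of_ds {ι : Type*} [Fintype ι] [DecidableEq ι] {M : Matrix ι ι ℝ} (hM : DS M)
    {x y : ι → ℝ} (hxy : M.mulVec x = y) : Majorizes x y := by
  obtain ⟨hpos, hrow, hcol⟩ := hM
  constructor
  · rw [← hxy]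
    calc ∑ i, x i = ∑ i, (∑ j, M j i) * x i := by simp [hcol]
      _ = ∑ i, ∑ j, M j i * x i := by simp [Finset.sum_mul]
      _ = ∑ j, ∑ i, M j i * x i := Finset.sum_comm
      _ = ∑ j, M.mulVec x j := by simp [Matrix.mulVec, dotProduct]
  · intro s
    set m := s.card with hm
    have hmN : m ≤ Fintype.card ι := by simpa [hm] using Finset.card_le_univ s
    set c : ι → ℝ := fun j => ∑ i ∈ s, M i j with hc
    have hc0 : ∀ j, 0 ≤ c j := fun j => Finset.sum_nonneg fun i _ => hpos i j
    have hc1 : ∀ j, c j ≤ 1 := by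
      intro j
      calc c j ≤ ∑ i, M i j :=
            Finset.sum_le_sum_of_subset_of_nonneg (Finset.subset_univ s)
              (fun i _ _ => hpos i j)
        _ = 1 := hcol j
    have hcs : ∑ j, c j = (m : ℝ) := by
      rw [hc]
      rw [Finset.sum_comm]
      simp only [hrow]
      simp [hm]
    obtain ⟨t, htc, ht⟩ := dot_le_set x c m hmN hc0 hc1 hcs
    refine ⟨t, htc, ?_⟩
    have : ∑ j ∈ s, y j = ∑ j, c j * x j := by
      rw [← hxy]
      simp only [Matrix.mulVec, dotProduct, hc, Finset.sum_mul]
      exact Finset.sum_comm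
    rw [this]
    exact ht

lemma two_point_sum' {α : Type*} [Fintype α] [DecidableEq α] {j k : α} (hjk : j ≠ k)
    (F G : α → ℝ) :
    ∑ s, (if s = j then F s else if s = k then G s else 0) = F j + G k := by
  have hpt : ∀ s, (if s = j then F s else if s = k then G s else 0)
      = (if s = j then F s else 0) + (if s = k then G s else 0) := by
    intro s
    rcases eq_or_ne s j with rfl | h1
    · simp [hjk]
    · rcases eq_or_ne s k with rfl | h2
      · simp [h1]
      · simp [h1, h2]
  simp only [hpt, Finset.sum_add_distrib]
  rw [Finset.sum_ite_eq' univ j F, Finset.sum_ite_eq' univ k G]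
  simp

lemma two_point_sum {α : Type*} [Fintype α] [DecidableEq α] {j k : α} (hjk : j ≠ k)
    (A B : ℝ) :
    ∑ s : α, (if s = j then A else if s = k then B else 0) = A + B :=
  two_point_sum' hjk (fun _ => A) (fun _ => B)

lemma one_point_sum {α : Type*} [Fintype α] [DecidableEq α] (r : α) (f : α → ℝ) :
    ∑ s, (if s = r then f s else 0) = f r := by
  rw [Finset.sum_ite_eq' univ r f]
  simp

/-- the T-transform matrix -/
def Ttrans (N : ℕ) (j k : Fin N) (lam : ℝ) : Matrix (Fin N) (Fin N) ℝ := fun r s =>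
  if r = j then (if s = j then 1 - lam else if s = k then lam else 0)
  else if r = k then (if s = j then lam else if s = k then 1 - lam else 0)
  else (if s = r then 1 else 0)

lemma Ttrans_apply_eq {j k : Fin N} (hjk : j ≠ k) (lam : ℝ) (r s : Fin N) :
    Ttrans N j k lam r s = Ttrans N j k lam s r := by
  unfold Ttrans
  rcases eq_or_ne r j with rfl | hrj
  · rcases eq_or_ne s r with rfl | hsr
    · rfl
    · rcases eq_or_ne s k with rfl | hsk
      · simp [hjk, Ne.symm hjk]
      · simp [hsr, hsk, Ne.symm hsr]
  · rcases eq_or_ne r k with rfl | hrk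
    · rcases eq_or_ne s j with rfl | hsj
      · simp [hjk, Ne.symm hjk]
      · rcases eq_or_ne s r with rfl | hsr
        · rfl
        · simp [hsj, hsr, hrj, Ne.symm hsr]
    · rcases eq_or_ne s j with rfl | hsj
      · simp [hrj, hrk, Ne.symm hrj]
      · rcases eq_or_ne s k with rfl | hsk
        · simp [hrj, hrk, Ne.symm hrk]
        · simp only [if_neg hrj, if_neg hrk, if_neg hsj, if_neg hsk]
          by_cases h : s = r
          · rw [if_pos h, if_pos h.symm]
          · rw [if_neg h, if_neg (fun hh => h hh.symm)]

lemma Ttrans_ds {j k : Fin N} (hjk : j ≠ k) {lam : ℝ} (h0 : 0 ≤ lam) (h1 : lam ≤ 1) :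
    DS (Ttrans N j k lam) := by
  have hrow : ∀ r, ∑ s, Ttrans N j k lam r s = 1 := by
    intro r
    by_cases hrj : r = j
    · simp only [Ttrans, if_pos hrj]
      rw [two_point_sum hjk]
      ring
    · by_cases hrk : r = k
      · simp only [Ttrans, if_neg hrj, if_pos hrk]
        rw [two_point_sum hjk]
        ring
      · simp only [Ttrans, if_neg hrj, if_neg hrk]
        simpa using one_point_sum r (fun _ => (1 : ℝ))
  refine ⟨fun r s => ?_, hrow, fun s => ?_⟩
  · unfold Ttrans
    split_ifs <;> linarith
  · calc ∑ r, Ttrans N j k lam r s = ∑ r, Ttrans N j k lam s r :=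
          Finset.sum_congr rfl fun r _ => (Ttrans_apply_eq hjk lam s r).symm
      _ = 1 := hrow s

lemma Ttrans_mulVec {j k : Fin N} (hjk : j ≠ k) (lam : ℝ) (a : Fin N → ℝ) :
    (Ttrans N j k lam).mulVec a = fun r =>
      if r = j then (1 - lam) * a j + lam * a k
      else if r = k then lam * a j + (1 - lam) * a k
      else a r := by
  funext r
  show ∑ s, Ttrans N j k lam r s * a s = _
  by_cases hrj : r = j
  · simp only [Ttrans, if_pos hrj]
    have hpt : ∀ s, (if s = j then 1 - lam else if s = k then lam else 0) * a s
        = (if s = j then (1 - lam) * a s else if s = k then lam * a s else 0) := by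
      intro s; split_ifs <;> ring
    simp only [hpt]
    exact two_point_sum' hjk (fun s => (1 - lam) * a s) (fun s => lam * a s)
  · by_cases hrk : r = k
    · simp only [Ttrans, if_neg hrj, if_pos hrk]
      have hpt : ∀ s, (if s = j then lam else if s = k then 1 - lam else 0) * a s
          = (if s = j then lam * a s else if s = k then (1 - lam) * a s else 0) := by
        intro s; split_ifs <;> ring
      simp only [hpt]
      exact two_point_sum' hjk (fun s => lam * a s) (fun s => (1 - lam) * a s)
    · simp only [Ttrans, if_neg hrj, if_neg hrk]
      have hpt : ∀ s, (if s = r then (1 : ℝ) else 0) * a s = (if s = r then a s else 0) := by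
        intro s; split_ifs <;> ring
      simp only [hpt]
      exact one_point_sum r a

/-- Hardy–Littlewood–Pólya, sorted version, by induction on the number of
differing coordinates. -/
lemma hlp_sorted : ∀ (c : ℕ) (a b : Fin N → ℝ), Anti a → Anti b →
    (∑ i, a i = ∑ i, b i) →
    (∀ m : ℕ, ∑ i ∈ P N m, b i ≤ ∑ i ∈ P N m, a i) →
    (univ.filter fun i => a i ≠ b i).card ≤ c →
    ∃ M : Matrix (Fin N) (Fin N) ℝ, DS M ∧ M.mulVec a = b := by
  intro c
  induction c with
  | zero =>
    intro a b _ _ _ _ hcard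
    have hab : a = b := by
      funext i
      by_contra hi
      have hmem : i ∈ univ.filter (fun i => a i ≠ b i) := by simp [hi]
      have := Finset.card_pos.mpr ⟨i, hmem⟩
      omega
    exact ⟨1, DS.one, by rw [hab, Matrix.one_mulVec]⟩
  | succ c ih =>
    intro a b ha hb hsum hpre hcard
    by_cases hab : a = b
    · exact ⟨1, DS.one, by rw [hab, Matrix.one_mulVec]⟩
    -- the smallest index where a < b
    have hK : (univ.filter fun i => a i < b i).Nonempty := by
      by_contra h
      rw [Finset.not_nonempty_iff_eq_empty, Finset.filter_eq_empty_iff] at h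
      have hge : ∀ i : Fin N, 0 ≤ a i - b i := by
        intro i
        have := h (Finset.mem_univ i)
        simp only [not_lt] at this
        linarith
      have hzero : ∑ i, (a i - b i) = 0 := by
        rw [Finset.sum_sub_distrib, hsum]; ring
      have hall := (Finset.sum_eq_zero_iff_of_nonneg (fun i _ => hge i)).mp hzero
      apply hab; funext i
      have := hall i (Finset.mem_univ i)
      linarith
    set k := (univ.filter fun i => a i < b i).min' hK with hkdef
    have hkm : a k < b k := by
      have := (univ.filter fun i => a i < b i).min'_mem hK
      rw [Finset.mem_filter] at this
      exact this.2
    have hlek : ∀ i : Fin N, i < k → b i ≤ a i := by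
      intro i hik
      by_contra h
      push_neg at h
      have : k ≤ i := Finset.min'_le _ i (by simp [h])
      exact absurd hik (not_lt.mpr this)
    -- the largest index below k where b < a
    have hJ : (univ.filter fun i => i < k ∧ b i < a i).Nonempty := by
      by_contra h
      rw [Finset.not_nonempty_iff_eq_empty, Finset.filter_eq_empty_iff] at h
      have heq : ∀ i : Fin N, i < k → a i = b i := by
        intro i hik
        have h1 := hlek i hik
        have h2 := h (Finset.mem_univ i)
        simp only [not_and, not_lt] at h2
        have := h2 hik
        linarith
      have h1 : ∑ i ∈ P N ((k : ℕ) + 1), (b i - a i) = b k - a k := by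
        apply Finset.sum_eq_single_of_mem
        · exact mem_P.mpr (by omega)
        · intro i hi hne
          have hi' : (i : ℕ) < (k : ℕ) + 1 := mem_P.mp hi
          have hvne : (i : ℕ) ≠ (k : ℕ) := fun hv => hne (Fin.ext hv)
          have : i < k := by rw [Fin.lt_def]; omega
          rw [heq i this]; ring
      have h2 := hpre ((k : ℕ) + 1)
      rw [Finset.sum_sub_distrib] at h1
      linarith
    set j := (univ.filter fun i => i < k ∧ b i < a i).max' hJ with hjdef
    have hjprop : j < k ∧ b j < a j := by
      have := (univ.filter fun i => i < k ∧ b i < a i).max'_mem hJ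
      rw [Finset.mem_filter] at this
      exact this.2
    obtain ⟨hjk, hjm⟩ := hjprop
    have hmid : ∀ i : Fin N, j < i → i < k → a i = b i := by
      intro i hji hik
      by_contra h
      have hble : b i ≤ a i := hlek i hik
      have hblt : b i < a i := lt_of_le_of_ne hble (fun he => h he.symm)
      have : i ≤ j := Finset.le_max' _ i (by simp [hik, hblt])
      exact absurd hji (not_lt.mpr this)
    have hjkne : j ≠ k := ne_of_lt hjk
    have hbjk : b k ≤ b j := hb j k (le_of_lt hjk)
    have hajk : a k < a j := by linarith
    set δ := min (a j - b j) (b k - a k) with hδdef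
    have hδ0 : 0 < δ := lt_min (by linarith) (by linarith)
    have hδ1 : δ ≤ a j - b j := min_le_left _ _
    have hδ2 : δ ≤ b k - a k := min_le_right _ _
    have hδlt : δ < a j - a k := lt_of_le_of_lt hδ1 (by linarith)
    set lam := δ / (a j - a k) with hlamdef
    have hden : 0 < a j - a k := by linarith
    have hlam0 : 0 ≤ lam := div_nonneg (le_of_lt hδ0) (le_of_lt hden)
    have hlam1 : lam ≤ 1 := by
      rw [hlamdef, div_le_one hden]; linarith
    have hlamδ : lam * (a j - a k) = δ := div_mul_cancel₀ δ (ne_of_gt hden)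
    -- the transformed vector
    set a' : Fin N → ℝ := fun i => if i = j then a j - δ else if i = k then a k + δ else a i
      with ha'def
    have ha'j : a' j = a j - δ := by rw [ha'def]; simp
    have ha'k : a' k = a k + δ := by rw [ha'def]; simp [Ne.symm hjkne]
    have ha'o : ∀ i, i ≠ j → i ≠ k → a' i = a i := by
      intro i h1 h2; rw [ha'def]; simp [h1, h2]
    -- T-transform maps a to a'
    have hMv : (Ttrans N j k lam).mulVec a = a' := by
      rw [Ttrans_mulVec hjkne lam a]
      funext r
      by_cases hrj : r = j
      · rw [if_pos hrj, hrj, ha'j]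
        linarith [hlamδ]
      · by_cases hrk : r = k
        · rw [if_neg hrj, if_pos hrk, hrk, ha'k]
          linarith [hlamδ]
        · rw [if_neg hrj, if_neg hrk, ha'o r hrj hrk]
    -- sum decomposition helper
    have hsplit : ∀ i, a' i = a i + ((if i = j then -δ else 0) + (if i = k then δ else 0)) := by
      intro i
      by_cases h1 : i = j
      · rw [h1, ha'j, if_pos rfl, if_neg hjkne]; ring
      · by_cases h2 : i = k
        · rw [h2, ha'k, if_neg (Ne.symm hjkne), if_pos rfl]; ring
        · rw [ha'o i h1 h2, if_neg h1, if_neg h2]; ring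
    have hSsum : ∀ S : Finset (Fin N), ∑ i ∈ S, a' i =
        ∑ i ∈ S, a i + ((if j ∈ S then -δ else 0) + (if k ∈ S then δ else 0)) := by
      intro S
      simp only [hsplit, Finset.sum_add_distrib]
      congr 1
      congr 1
      · exact Finset.sum_ite_eq' S j (fun _ => -δ)
      · exact Finset.sum_ite_eq' S k (fun _ => δ)
    -- a' is still decreasing
    have ha' : Anti a' := by
      intro i1 i2 h12
      rcases eq_or_lt_of_le h12 with heq | hlt
      · rw [heq]
      by_cases h2j : i2 = j
      · have hl1j : i1 < j := by rw [h2j] at hlt; exact hlt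
        have h1j : i1 ≠ j := ne_of_lt hl1j
        have h1k : i1 ≠ k := ne_of_lt (lt_trans hl1j hjk)
        rw [h2j, ha'j, ha'o i1 h1j h1k]
        have := ha i1 j (le_of_lt hl1j)
        linarith
      by_cases h2k : i2 = k
      · rw [h2k, ha'k]
        by_cases h1j : i1 = j
        · rw [h1j, ha'j]; linarith
        · have hl1k : i1 < k := by rw [h2k] at hlt; exact hlt
          have h1k : i1 ≠ k := ne_of_lt hl1k
          rw [ha'o i1 h1j h1k]
          have hb1 : b i1 ≤ a i1 := hlek i1 hl1k
          have hb2 : b k ≤ b i1 := hb i1 k (le_of_lt hl1k)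
          linarith
      rw [ha'o i2 h2j h2k]
      by_cases h1j : i1 = j
      · rw [h1j, ha'j]
        have hji2 : j < i2 := by rw [h1j] at hlt; exact hlt
        rcases lt_or_gt_of_ne h2k with hik2 | hki2
        · have he := hmid i2 hji2 hik2
          have hbb : b i2 ≤ b j := hb j i2 (le_of_lt hji2)
          linarith
        · have hh : a i2 ≤ a k := ha k i2 (le_of_lt hki2)
          linarith
      by_cases h1k : i1 = k
      · rw [h1k, ha'k]
        have hki2 : k < i2 := by rw [h1k] at hlt; exact hlt
        have : a i2 ≤ a k := ha k i2 (le_of_lt hki2)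
        linarith
      · rw [ha'o i1 h1j h1k]
        exact ha i1 i2 h12
    -- the sum is preserved
    have hsum' : ∑ i, a' i = ∑ i, b i := by
      rw [hSsum univ, if_pos (Finset.mem_univ j), if_pos (Finset.mem_univ k), hsum]
      ring
    -- prefix sums still dominate
    have hpre' : ∀ m : ℕ, ∑ i ∈ P N m, b i ≤ ∑ i ∈ P N m, a' i := by
      intro m
      rw [hSsum (P N m)]
      by_cases hjm' : (j : ℕ) < m
      · by_cases hkm' : (k : ℕ) < m
        · rw [if_pos (mem_P.mpr hjm'), if_pos (mem_P.mpr hkm')]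
          linarith [hpre m]
        · rw [if_pos (mem_P.mpr hjm'), if_neg (fun h => hkm' (mem_P.mp h))]
          have hkey : δ ≤ ∑ i ∈ P N m, (a i - b i) := by
            have hjP : j ∈ P N m := mem_P.mpr hjm'
            have hnn : ∀ i ∈ P N m, 0 ≤ a i - b i := by
              intro i hi
              have him : (i : ℕ) < m := mem_P.mp hi
              have hikk : i < k := by
                rw [Fin.lt_def]; omega
              linarith [hlek i hikk]
            have h1 := Finset.single_le_sum hnn hjP
            linarith
          rw [Finset.sum_sub_distrib] at hkey
          linarith
      · have hkm' : ¬ (k : ℕ) < m := by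
          have hh := hjk; rw [Fin.lt_def] at hh; omega
        rw [if_neg (fun h => hjm' (mem_P.mp h)), if_neg (fun h => hkm' (mem_P.mp h))]
        have := hpre m
        linarith
    -- the number of differing coordinates strictly decreases
    have hsub : (univ.filter fun i => a' i ≠ b i) ⊆ (univ.filter fun i => a i ≠ b i) := by
      intro i hi
      rw [Finset.mem_filter] at hi ⊢
      refine ⟨Finset.mem_univ i, fun heq => hi.2 ?_⟩
      have hij : i ≠ j := by rintro rfl; linarith
      have hik' : i ≠ k := by rintro rfl; linarith
      rw [ha'o i hij hik', heq]
    have hwit : ∃ w, w ∈ (univ.filter fun i => a i ≠ b i) ∧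
        w ∉ (univ.filter fun i => a' i ≠ b i) := by
      rcases le_total (a j - b j) (b k - a k) with hc | hc
      · refine ⟨j, by simp [ne_of_gt hjm], ?_⟩
        have hδeq : δ = a j - b j := min_eq_left hc
        simp only [Finset.mem_filter, Finset.mem_univ, true_and, not_not]
        rw [ha'j, hδeq]; ring
      · refine ⟨k, by simp [ne_of_lt hkm], ?_⟩
        have hδeq : δ = b k - a k := min_eq_right hc
        simp only [Finset.mem_filter, Finset.mem_univ, true_and, not_not]
        rw [ha'k, hδeq]; ring
    obtain ⟨w, hw1, hw2⟩ := hwit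
    have hltc : (univ.filter fun i => a' i ≠ b i).card < (univ.filter fun i => a i ≠ b i).card :=
      Finset.card_lt_card ((Finset.ssubset_iff_of_subset hsub).mpr ⟨w, hw1, hw2⟩)
    obtain ⟨M₁, hM₁, hM₁v⟩ := ih a' b ha' hb hsum' hpre' (by omega)
    refine ⟨M₁ * Ttrans N j k lam, DS.mul hM₁ (Ttrans_ds hjkne hlam0 hlam1), ?_⟩
    rw [← Matrix.mulVec_mulVec, hMv, hM₁v]

/-- Hardy–Littlewood–Pólya over an arbitrary finite index type. -/
lemma hlp {ι : Type*} [Fintype ι] [DecidableEq ι] {x y : ι → ℝ} (h : Majorizes x y) :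
    ∃ M : Matrix ι ι ℝ, DS M ∧ M.mulVec x = y := by
  classical
  set N := Fintype.card ι with hN
  set e : ι ≃ Fin N := Fintype.equivFin ι with he
  obtain ⟨σ, hσ⟩ := exists_sort (fun i => x (e.symm i))
  obtain ⟨τ, hτ⟩ := exists_sort (fun i => y (e.symm i))
  set φ : Fin N ≃ ι := σ.trans e.symm with hφ
  set ψ : Fin N ≃ ι := τ.trans e.symm with hψ
  set a : Fin N → ℝ := fun i => x (φ i) with hadef
  set b : Fin N → ℝ := fun i => y (ψ i) with hbdef
  have hanti_a : Anti a := hσ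
  have hanti_b : Anti b := hτ
  have hsum_ax : ∑ i, a i = ∑ l, x l := Equiv.sum_comp φ x
  have hsum_by : ∑ i, b i = ∑ l, y l := Equiv.sum_comp ψ y
  have hsum : ∑ i, a i = ∑ i, b i := by rw [hsum_ax, hsum_by, h.1]
  have hpre : ∀ m : ℕ, ∑ i ∈ P N m, b i ≤ ∑ i ∈ P N m, a i := by
    intro m
    by_cases hm : m ≤ N
    · set emb : Fin m ↪ ι :=
        (⟨Fin.castLE hm, Fin.castLE_injective hm⟩ : Fin m ↪ Fin N).trans ψ.toEmbedding
        with hembdef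
      set s : Finset ι := univ.map emb with hs
      have hscard : s.card = m := by simp [hs]
      obtain ⟨t, htc, hty⟩ := h.2 s
      have hsb : ∑ l ∈ s, y l = ∑ i ∈ P N m, b i := by
        rw [hs, Finset.sum_map, P_eq_map hm, Finset.sum_map]
        rfl
      set t' : Finset (Fin N) := t.map φ.symm.toEmbedding with ht'
      have ht'c : t'.card = m := by rw [ht', Finset.card_map, htc, hscard]
      have htx : ∑ i ∈ t', a i = ∑ l ∈ t, x l := by
        rw [ht', Finset.sum_map]
        apply Finset.sum_congr rfl
        intro l _
        show x (φ (φ.symm l)) = x l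
        rw [Equiv.apply_symm_apply]
      have hb1 := sum_le_prefix a hanti_a t'
      rw [ht'c] at hb1
      calc ∑ i ∈ P N m, b i = ∑ l ∈ s, y l := hsb.symm
        _ ≤ ∑ l ∈ t, x l := hty
        _ = ∑ i ∈ t', a i := htx.symm
        _ ≤ ∑ i ∈ P N m, a i := hb1
    · push_neg at hm
      rw [P_all (le_of_lt hm)]
      exact le_of_eq hsum.symm
  obtain ⟨M₀, hM₀, hM₀v⟩ := hlp_sorted ((univ.filter fun i => a i ≠ b i).card) a b
    hanti_a hanti_b hsum hpre (le_refl _)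
  refine ⟨fun l l' => M₀ (ψ.symm l) (φ.symm l'), ⟨fun l l' => hM₀.1 _ _, ?_, ?_⟩, ?_⟩
  · intro l
    rw [← Equiv.sum_comp φ (fun l' => M₀ (ψ.symm l) (φ.symm l'))]
    simp only [Equiv.symm_apply_apply]
    exact hM₀.2.1 _
  · intro l'
    rw [← Equiv.sum_comp ψ (fun l => M₀ (ψ.symm l) (φ.symm l'))]
    simp only [Equiv.symm_apply_apply]
    exact hM₀.2.2 _
  · funext l
    show ∑ l', M₀ (ψ.symm l) (φ.symm l') * x l' = y l
    rw [← Equiv.sum_comp φ (fun l' => M₀ (ψ.symm l) (φ.symm l') * x l')]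
    simp only [Equiv.symm_apply_apply]
    have h1 : ∑ s1, M₀ (ψ.symm l) s1 * x (φ s1) = (M₀.mulVec a) (ψ.symm l) := rfl
    rw [h1, hM₀v]
    show y (ψ (ψ.symm l)) = y l
    rw [Equiv.apply_symm_apply]

end EmbedMajAux

/-- Embedded majorization equals d-majorization: `Γ_d(p)` majorizes
`Γ_d(q)` iff there is a stochastic matrix `T` (nonnegative, columns summing to 1)
with `T g = g` and `T p = q`. -/
theorem embed_majorizes_iff_dMajorizes {n : ℕ} (d : Fin n → ℕ) (hd : ∀ i, 0 < d i)
    (D : ℕ) (hD : D = ∑ i, d i) (hDpos : 0 < D)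
    (g : Fin n → ℝ) (hg : ∀ i, g i = (d i : ℝ) / (D : ℝ))
    (p q : Fin n → ℝ) (hp : IsProbVec p) (hq : IsProbVec q) :
    Majorizes (embed d p) (embed d q) ↔
      ∃ T : Matrix (Fin n) (Fin n) ℝ,
        (∀ i j, 0 ≤ T i j) ∧ (∀ j, ∑ i, T i j = 1) ∧
          T.mulVec g = g ∧ T.mulVec p = q := by
  classical
  have hdR : ∀ i, (0:ℝ) < (d i : ℝ) := fun i => by exact_mod_cast hd i
  have hdne : ∀ i, (d i : ℝ) ≠ 0 := fun i => ne_of_gt (hdR i)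
  have hDR : (0:ℝ) < (D : ℝ) := by exact_mod_cast hDpos
  have hDne : (D : ℝ) ≠ 0 := ne_of_gt hDR
  have hsig : ∀ f : (Σ i : Fin n, Fin (d i)) → ℝ,
      ∑ z, f z = ∑ i, ∑ a : Fin (d i), f ⟨i, a⟩ := by
    intro f
    rw [← Finset.univ_sigma_univ, Finset.sum_sigma]
  constructor
  · intro hmaj
    obtain ⟨M, hM, hMv⟩ := EmbedMajAux.hlp hmaj
    obtain ⟨hM0, hMrow, hMcol⟩ := hM
    refine ⟨fun i j => (∑ a : Fin (d i), ∑ b : Fin (d j), M ⟨i,a⟩ ⟨j,b⟩) / (d j : ℝ),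
      ?_, ?_, ?_, ?_⟩
    · intro i j
      apply div_nonneg _ (le_of_lt (hdR j))
      exact Finset.sum_nonneg fun a _ => Finset.sum_nonneg fun b _ => hM0 _ _
    · intro j
      rw [← Finset.sum_div, div_eq_one_iff_eq (hdne j)]
      calc (∑ i, ∑ a : Fin (d i), ∑ b : Fin (d j), M ⟨i,a⟩ ⟨j,b⟩)
          = ∑ i, ∑ b : Fin (d j), ∑ a : Fin (d i), M ⟨i,a⟩ ⟨j,b⟩ :=
            Finset.sum_congr rfl (fun i _ => Finset.sum_comm)
        _ = ∑ b : Fin (d j), ∑ i, ∑ a : Fin (d i), M ⟨i,a⟩ ⟨j,b⟩ := Finset.sum_comm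
        _ = ∑ _b : Fin (d j), (1:ℝ) := Finset.sum_congr rfl (fun b _ => by
              rw [← hsig (fun z => M z ⟨j,b⟩)]
              exact hMcol ⟨j,b⟩)
        _ = (d j : ℝ) := by simp
    · funext i
      show ∑ j, (∑ a : Fin (d i), ∑ b : Fin (d j), M ⟨i,a⟩ ⟨j,b⟩) / (d j : ℝ) * g j = g i
      have hterm : ∀ j, (∑ a : Fin (d i), ∑ b : Fin (d j), M ⟨i,a⟩ ⟨j,b⟩) / (d j : ℝ) * g j
          = (∑ a : Fin (d i), ∑ b : Fin (d j), M ⟨i,a⟩ ⟨j,b⟩) / (D : ℝ) := by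
        intro j
        rw [hg j]
        rw [div_mul_div_comm, mul_comm ((d j : ℝ)) ((D:ℝ))]
        rw [mul_div_mul_right _ _ (hdne j)]
      calc ∑ j, (∑ a : Fin (d i), ∑ b : Fin (d j), M ⟨i,a⟩ ⟨j,b⟩) / (d j : ℝ) * g j
          = ∑ j, (∑ a : Fin (d i), ∑ b : Fin (d j), M ⟨i,a⟩ ⟨j,b⟩) / (D : ℝ) :=
            Finset.sum_congr rfl (fun j _ => hterm j)
        _ = (∑ j, ∑ a : Fin (d i), ∑ b : Fin (d j), M ⟨i,a⟩ ⟨j,b⟩) / (D : ℝ) := by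
            rw [Finset.sum_div]
        _ = (∑ a : Fin (d i), ∑ j, ∑ b : Fin (d j), M ⟨i,a⟩ ⟨j,b⟩) / (D : ℝ) := by
            rw [Finset.sum_comm]
        _ = (∑ _a : Fin (d i), (1:ℝ)) / (D : ℝ) := by
            congr 1
            apply Finset.sum_congr rfl
            intro a _
            rw [← hsig (fun z => M ⟨i,a⟩ z)]
            exact hMrow ⟨i,a⟩
        _ = g i := by rw [hg i]; simp
    · funext i
      show ∑ j, (∑ a : Fin (d i), ∑ b : Fin (d j), M ⟨i,a⟩ ⟨j,b⟩) / (d j : ℝ) * p j = q i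
      have hMvi : ∀ a : Fin (d i),
          ∑ j, ∑ b : Fin (d j), M ⟨i,a⟩ ⟨j,b⟩ * (p j / (d j : ℝ)) = q i / (d i : ℝ) := by
        intro a
        have h1 := congrFun hMv ⟨i,a⟩
        have h2 : (M.mulVec (embed d p)) ⟨i,a⟩ = ∑ z, M ⟨i,a⟩ z * embed d p z := rfl
        rw [h2] at h1
        rw [hsig (fun z => M ⟨i,a⟩ z * embed d p z)] at h1
        simp only [embed] at h1
        exact h1
      calc ∑ j, (∑ a : Fin (d i), ∑ b : Fin (d j), M ⟨i,a⟩ ⟨j,b⟩) / (d j : ℝ) * p j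
          = ∑ j, ∑ a : Fin (d i), ∑ b : Fin (d j), M ⟨i,a⟩ ⟨j,b⟩ * (p j / (d j : ℝ)) := by
            apply Finset.sum_congr rfl
            intro j _
            rw [div_mul_eq_mul_div, mul_div_assoc, Finset.sum_mul]
            apply Finset.sum_congr rfl
            intro a _
            rw [Finset.sum_mul]
        _ = ∑ a : Fin (d i), ∑ j, ∑ b : Fin (d j), M ⟨i,a⟩ ⟨j,b⟩ * (p j / (d j : ℝ)) :=
            Finset.sum_comm
        _ = ∑ _a : Fin (d i), q i / (d i : ℝ) :=
            Finset.sum_congr rfl (fun a _ => hMvi a)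
        _ = q i := by
            rw [Finset.sum_const, Finset.card_univ, Fintype.card_fin, nsmul_eq_mul,
              mul_comm ((d i : ℝ)) (q i / (d i : ℝ)), div_mul_cancel₀ _ (hdne i)]
  · rintro ⟨T, hT0, hTcol, hTg, hTp⟩
    have hrowg : ∀ i, ∑ j, T i j * (d j : ℝ) = (d i : ℝ) := by
      intro i
      have h1 : ∑ j, T i j * g j = g i := congrFun hTg i
      have h2 : ∑ j, T i j * ((d j : ℝ) / (D : ℝ)) = (d i : ℝ) / (D : ℝ) := by
        rw [← hg i, ← h1]
        apply Finset.sum_congr rfl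
        intro j _
        rw [hg j]
      have h3 : ∑ j, T i j * (d j : ℝ) = (∑ j, T i j * ((d j : ℝ) / (D : ℝ))) * (D : ℝ) := by
        rw [Finset.sum_mul]
        apply Finset.sum_congr rfl
        intro j _
        field_simp
      rw [h3, h2]
      
      field_simp
    set M : Matrix (Σ i : Fin n, Fin (d i)) (Σ i : Fin n, Fin (d i)) ℝ :=
      fun z w => T z.1 w.1 / (d z.1 : ℝ) with hMdef
    have hconst : ∀ (j : Fin n) (c : ℝ), ∑ _b : Fin (d j), c = (d j : ℝ) * c := by
      intro j c
      rw [Finset.sum_const, Finset.card_univ, Fintype.card_fin, nsmul_eq_mul]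
    have hDS : EmbedMajAux.DS M := by
      refine ⟨fun z w => div_nonneg (hT0 _ _) (le_of_lt (hdR _)), fun z => ?_, fun w => ?_⟩
      · show ∑ w : (Σ i : Fin n, Fin (d i)), T z.1 w.1 / (d z.1 : ℝ) = 1
        rw [hsig (fun w => T z.1 w.1 / (d z.1 : ℝ))]
        calc ∑ j, ∑ _b : Fin (d j), T z.1 j / (d z.1 : ℝ)
            = ∑ j, (d j : ℝ) * (T z.1 j / (d z.1 : ℝ)) :=
              Finset.sum_congr rfl (fun j _ => hconst j _)
          _ = (∑ j, T z.1 j * (d j : ℝ)) / (d z.1 : ℝ) := by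
              rw [Finset.sum_div]
              apply Finset.sum_congr rfl
              intro j _
              ring
          _ = 1 := by rw [hrowg z.1, div_self (hdne z.1)]
      · show ∑ z : (Σ i : Fin n, Fin (d i)), T z.1 w.1 / (d z.1 : ℝ) = 1
        rw [hsig (fun z => T z.1 w.1 / (d z.1 : ℝ))]
        calc ∑ i, ∑ _a : Fin (d i), T i w.1 / (d i : ℝ)
            = ∑ i, T i w.1 := Finset.sum_congr rfl (fun i _ => by
              rw [hconst i _, mul_comm, div_mul_cancel₀ _ (hdne i)])
          _ = 1 := hTcol w.1
    have hMv : M.mulVec (embed d p) = embed d q := by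
      funext z
      show ∑ w : (Σ i : Fin n, Fin (d i)), T z.1 w.1 / (d z.1 : ℝ) * embed d p w = embed d q z
      rw [hsig (fun w => T z.1 w.1 / (d z.1 : ℝ) * embed d p w)]
      simp only [embed]
      calc ∑ j, ∑ _b : Fin (d j), T z.1 j / (d z.1 : ℝ) * (p j / (d j : ℝ))
          = ∑ j, T z.1 j * p j / (d z.1 : ℝ) := by
            apply Finset.sum_congr rfl
            intro j _
            rw [hconst j _]
            have hj := hdne j
            have hz := hdne z.1
            field_simp
        _ = (∑ j, T z.1 j * p j) / (d z.1 : ℝ) := by rw [Finset.sum_div]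
        _ = q z.1 / (d z.1 : ℝ) := by
            have hq1 : ∑ j, T z.1 j * p j = q z.1 := congrFun hTp z.1
            rw [hq1]
    exact EmbedMajAux.maj_of_ds hDS hMv
end
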